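/- arXiv:1901.07712 — 2 statements merged into one kernel-verified Lean document; each statement's English description precedes it below -/
import Mathlib

section
/- Let (Ω,σ) be a topological dynamical system and f continuous with ergodic minimizing value f̄. Assume there exists C ≥ 0 such that Σ_{k=0}^{n-1}(f - f̄)(σ^k(ω)) ≥ -C for all ω ∈ Ω and all n ≥ 1. Then for every ω in the Mather set 𝓜(f) and every n ≥ 1, Σ_{k=0}^{n-1}(f - f̄)(σ^k(ω)) ≤ C. -/
open MeasureTheory Filter Topology

noncomputable section

variable {Ω : Type*}

/-- `μ` is a `σ`-invariant Borel probability measure. -/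
def IsInvProb [MeasurableSpace Ω] (σ : Ω → Ω) (μ : Measure Ω) : Prop :=
  IsProbabilityMeasure μ ∧ Measure.map σ μ = μ

/-- Birkhoff sum `∑_{k=0}^{n-1} g(σ^k ω)`. -/
def birk (σ : Ω → Ω) (g : Ω → ℝ) (n : ℕ) (ω : Ω) : ℝ :=
  ∑ k ∈ Finset.range n, g (σ^[k] ω)

/-- The transfer function `u(ω) = - inf_{n ≥ 1} ∑_{k=0}^{n-1} (f - f̄)(σ^k ω)`. -/
def uFn (σ : Ω → Ω) (f : Ω → ℝ) (fbar : ℝ) (ω : Ω) : ℝ :=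
  -(⨅ n : ℕ, birk σ (fun x => f x - fbar) (n + 1) ω)

/-- The support of a measure: points all of whose open neighborhoods have positive measure. -/
def msupport [TopologicalSpace Ω] [MeasurableSpace Ω] (μ : Measure Ω) : Set Ω :=
  {ω | ∀ U : Set Ω, IsOpen U → ω ∈ U → 0 < μ U}

/-- `μ` is a minimizing measure for `f` with ergodic minimizing value `fbar`. -/
def IsMinimizing [MeasurableSpace Ω] (σ : Ω → Ω) (f : Ω → ℝ) (fbar : ℝ)
    (μ : Measure Ω) : Prop :=
  IsInvProb σ μ ∧ ∫ x, f x ∂μ = fbar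

/-- The Mather set: union of supports of minimizing measures. -/
def MatherSet [TopologicalSpace Ω] [MeasurableSpace Ω] (σ : Ω → Ω) (f : Ω → ℝ)
    (fbar : ℝ) : Set Ω :=
  {ω | ∃ μ : Measure Ω, IsMinimizing σ f fbar μ ∧ ω ∈ msupport μ}

/-- `fbar` is the minimum of `∫ f dμ` over invariant probability measures. -/
def IsErgMinValue [MeasurableSpace Ω] (σ : Ω → Ω) (f : Ω → ℝ) (fbar : ℝ) : Prop :=
  IsLeast {x : ℝ | ∃ μ : Measure Ω, IsInvProb σ μ ∧ ∫ w, f w ∂μ = x} fbar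

/-!
Put `g = f - f̄` and `u = uFn σ f f̄ = -inf_{n ≥ 1} S_n g`, where `S_n` is the Birkhoff sum. The
lower bound on the Birkhoff sums makes `u` a bounded function with `u ≤ C`, and splitting off the
first term of each Birkhoff sum gives `u ∘ σ - u ≤ g` everywhere. For a minimizing measure `μ` both
sides have integral zero, so `g = u ∘ σ - u` holds `μ`-a.e., and then along whole orbits. There
`S_n g = u ∘ σ^n - u` telescopes, and `-u ≤ S_1 g = u ∘ σ - u` gives `u ∘ σ ≥ 0`, hence `u ≥ 0`
a.e. by invariance. So `S_n g ≤ C` `μ`-a.e., and since `{S_n g ≤ C}` is closed it contains the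
support of `μ`.
-/

section Birkhoff

variable (σ : Ω → Ω) (g : Ω → ℝ)

lemma birk_succ (n : ℕ) (ω : Ω) : birk σ g (n + 1) ω = g ω + birk σ g n (σ ω) := by
  simp only [birk, Finset.sum_range_succ', Function.iterate_succ_apply, Function.iterate_zero_apply]
  ring

@[simp]
lemma birk_one (ω : Ω) : birk σ g 1 ω = g ω := by
  simp [birk]

lemma birk_eq_sub_of_forall_iterate {u : Ω → ℝ} {ω : Ω}
    (hcob : ∀ k, g (σ^[k] ω) = u (σ (σ^[k] ω)) - u (σ^[k] ω)) (n : ℕ) :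
    birk σ g n ω = u (σ^[n] ω) - u ω := by
  simp only [birk, hcob, ← Function.iterate_succ_apply' σ]
  exact Finset.sum_range_sub (fun k => u (σ^[k] ω)) n

lemma measurable_birk [MeasurableSpace Ω] {σ : Ω → Ω} {g : Ω → ℝ} (hσ : Measurable σ)
    (hg : Measurable g) (n : ℕ) : Measurable (birk σ g n) :=
  Finset.measurable_sum _ fun k _ => hg.comp (hσ.iterate k)

lemma continuous_birk [TopologicalSpace Ω] {σ : Ω → Ω} {g : Ω → ℝ} (hσ : Continuous σ)
    (hg : Continuous g) (n : ℕ) : Continuous (birk σ g n) :=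
  continuous_finsetSum _ fun k _ => hg.comp (hσ.iterate k)

end Birkhoff

section TransferFunction

variable {σ : Ω → Ω} {f : Ω → ℝ} {fbar : ℝ} {ω : Ω}

lemma uFn_le {C : ℝ} (hlow : ∀ n, 1 ≤ n → birk σ (fun x => f x - fbar) n ω ≥ -C) :
    uFn σ f fbar ω ≤ C :=
  neg_le.mp <| le_ciInf (f := fun n : ℕ => birk σ (fun x => f x - fbar) (n + 1) ω)
    fun n => hlow (n + 1) n.succ_pos

lemma neg_uFn_le_birk
    (hbdd : BddBelow (Set.range fun n : ℕ => birk σ (fun x => f x - fbar) (n + 1) ω))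
    (n : ℕ) :
    -uFn σ f fbar ω ≤ birk σ (fun x => f x - fbar) (n + 1) ω := by
  rw [uFn, neg_neg]
  exact ciInf_le hbdd n

lemma neg_uFn_le
    (hbdd : BddBelow (Set.range fun n : ℕ => birk σ (fun x => f x - fbar) (n + 1) ω)) :
    -uFn σ f fbar ω ≤ f ω - fbar := by
  simpa using neg_uFn_le_birk hbdd 0

lemma uFn_comp_sub_uFn_le
    (hbdd : BddBelow (Set.range fun n : ℕ => birk σ (fun x => f x - fbar) (n + 1) ω)) :
    uFn σ f fbar (σ ω) - uFn σ f fbar ω ≤ f ω - fbar := by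
  have h : -uFn σ f fbar ω - (f ω - fbar) ≤ -uFn σ f fbar (σ ω) := by
    refine (le_ciInf fun n : ℕ => ?_).trans_eq (neg_neg _).symm
    have := neg_uFn_le_birk hbdd (n + 1)
    rw [birk_succ] at this
    linarith
  linarith

end TransferFunction

lemma measurable_uFn [MeasurableSpace Ω] {σ : Ω → Ω} {f : Ω → ℝ} (hσ : Measurable σ)
    (hf : Measurable f) (fbar : ℝ) : Measurable (uFn σ f fbar) :=
  (Measurable.iInf fun n => measurable_birk hσ (hf.sub_const fbar) (n + 1)).neg

lemma IsInvProb.measurePreserving [MeasurableSpace Ω] {σ : Ω → Ω} {μ : Measure Ω}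
    (hσ : Measurable σ) (hμ : IsInvProb σ μ) : MeasurePreserving σ μ μ :=
  ⟨hσ, hμ.2⟩

namespace MeasureTheory.MeasurePreserving

variable {α : Type*} [MeasurableSpace α] {μ : Measure α} {σ : α → α}

lemma ae_of_ae_comp (hσ : MeasurePreserving σ μ μ) {p : α → Prop} (hp : MeasurableSet {x | p x})
    (h : ∀ᵐ x ∂μ, p (σ x)) : ∀ᵐ x ∂μ, p x := by
  rw [← hσ.map_eq]
  exact (ae_map_iff hσ.aemeasurable hp).mpr h

lemma ae_forall_iterate (hσ : MeasurePreserving σ μ μ) {p : α → Prop} (h : ∀ᵐ x ∂μ, p x) :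
    ∀ᵐ x ∂μ, ∀ k, p (σ^[k] x) :=
  ae_all_iff.mpr fun k => (hσ.iterate k).quasiMeasurePreserving.ae h

lemma ae_eq_coboundary_of_coboundary_le (hσ : MeasurePreserving σ μ μ)
    {g u : α → ℝ} (hg : Integrable g μ) (hg0 : ∫ x, g x ∂μ = 0) (hu : Integrable u μ)
    (hle : ∀ x, u (σ x) - u x ≤ g x) : ∀ᵐ x ∂μ, g x = u (σ x) - u x := by
  have hus : Integrable (fun x => u (σ x)) μ := hσ.integrable_comp_of_integrable hu
  have hint_us : ∫ x, u (σ x) ∂μ = ∫ x, u x ∂μ := by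
    rw [← integral_map hσ.aemeasurable (by rw [hσ.map_eq]; exact hu.aestronglyMeasurable),
      hσ.map_eq]
  have hcob : Integrable (fun x => u (σ x) - u x) μ := hus.sub hu
  have hint : ∫ x, g x - (u (σ x) - u x) ∂μ = 0 := by
    rw [integral_sub hg hcob, integral_sub hus hu, hint_us, hg0]
    ring
  have hzero := (integral_eq_zero_iff_of_nonneg (fun x => sub_nonneg.mpr (hle x))
    (hg.sub hcob)).mp hint
  filter_upwards [hzero] with x hx
  exact sub_eq_zero.mp hx

end MeasureTheory.MeasurePreserving

lemma msupport_subset_of_ae_mem [TopologicalSpace Ω] [MeasurableSpace Ω] {μ : Measure Ω}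
    {F : Set Ω} (hF : IsClosed F) (h : ∀ᵐ x ∂μ, x ∈ F) : msupport μ ⊆ F := by
  intro x hx
  by_contra hxF
  exact (hx Fᶜ hF.isOpen_compl hxF).ne' (ae_iff.mp h)

theorem stmt4_general [MetricSpace Ω] [CompactSpace Ω] [MeasurableSpace Ω] [BorelSpace Ω]
    (σ : Ω → Ω) (hσ : Continuous σ) (f : Ω → ℝ) (hf : Continuous f) (fbar : ℝ)
    (C : ℝ)
    (hlow : ∀ ω : Ω, ∀ n : ℕ, 1 ≤ n → birk σ (fun x => f x - fbar) n ω ≥ -C) :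
    ∀ ω ∈ MatherSet σ f fbar, ∀ n : ℕ, 1 ≤ n →
      birk σ (fun x => f x - fbar) n ω ≤ C := by
  rintro ω₀ ⟨μ, ⟨hμ, hintf⟩, hω₀⟩ n -
  have : IsProbabilityMeasure μ := hμ.1
  set u := uFn σ f fbar
  have hmp := hμ.measurePreserving hσ.measurable
  have hg : Continuous fun x => f x - fbar := hf.sub continuous_const
  have hum : Measurable u := measurable_uFn hσ.measurable hf.measurable fbar
  have hbdd (ω : Ω) :
      BddBelow (Set.range fun n : ℕ => birk σ (fun x => f x - fbar) (n + 1) ω) :=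
    ⟨-C, by rintro _ ⟨n, rfl⟩; exact hlow ω (n + 1) n.succ_pos⟩
  have hfi : Integrable f μ := hf.integrable_of_hasCompactSupport (.of_compactSpace _)
  have hgi : Integrable (fun x => f x - fbar) μ := hfi.sub (integrable_const fbar)
  have hg0 : ∫ x, f x - fbar ∂μ = 0 := by simp [integral_sub hfi, hintf]
  have hui : Integrable u μ :=
    integrable_of_le_of_le hum.aestronglyMeasurable
      (.of_forall fun ω => neg_le.mp (neg_uFn_le (hbdd ω)))
      (.of_forall fun ω => uFn_le (hlow ω)) hgi.neg (integrable_const C)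
  have hcob : ∀ᵐ ω ∂μ, f ω - fbar = u (σ ω) - u ω :=
    hmp.ae_eq_coboundary_of_coboundary_le hgi hg0 hui fun ω => uFn_comp_sub_uFn_le (hbdd ω)
  have hu_nonneg : ∀ᵐ ω ∂μ, 0 ≤ u ω :=
    hmp.ae_of_ae_comp (measurableSet_le measurable_const hum)
      (hcob.mono fun ω h => by linarith [neg_uFn_le (hbdd ω)])
  have hbound : ∀ᵐ ω ∂μ, birk σ (fun x => f x - fbar) n ω ≤ C := by
    filter_upwards [hmp.ae_forall_iterate hcob, hu_nonneg] with ω hω hω0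
    rw [birk_eq_sub_of_forall_iterate σ _ hω]
    linarith [uFn_le (hlow (σ^[n] ω))]
  exact msupport_subset_of_ae_mem (isClosed_le (continuous_birk hσ hg n) continuous_const)
    hbound hω₀

/-- upper bound `C` on Birkhoff sums of `f - f̄` on the Mather set. -/
theorem stmt4 [MetricSpace Ω] [CompactSpace Ω] [MeasurableSpace Ω] [BorelSpace Ω]
    (σ : Ω → Ω) (hσ : Continuous σ) (f : Ω → ℝ) (hf : Continuous f) (fbar : ℝ)
    (hfbar : IsErgMinValue σ f fbar) (C : ℝ) (hC : 0 ≤ C)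
    (hlow : ∀ ω : Ω, ∀ n : ℕ, 1 ≤ n → birk σ (fun x => f x - fbar) n ω ≥ -C) :
    ∀ ω ∈ MatherSet σ f fbar, ∀ n : ℕ, 1 ≤ n →
      birk σ (fun x => f x - fbar) n ω ≤ C :=
  stmt4_general σ hσ f hf fbar C hlow
end
end

section
/- Let (Ω,σ) be a topological dynamical system and f continuous with ergodic minimizing value f̄. Assume there exists C ≥ 0 such that Σ_{k=0}^{n-1}(f - f̄)(σ^k(ω)) ≥ -C for all ω ∈ Ω, n ≥ 1. Then any invariant probability measure μ whose support is contained in the Mather set 𝓜(f) is a minimizing measure: ∫f dμ = f̄. -/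
open MeasureTheory Filter Topology

noncomputable section

variable {Ω : Type*}

/-! ### Auxiliary lemmas -/

lemma birk_succ_left (σ : Ω → Ω) (g : Ω → ℝ) (n : ℕ) (ω : Ω) :
    birk σ g (n + 1) ω = g ω + birk σ g n (σ ω) := by
  unfold birk
  rw [Finset.sum_range_succ']
  simp [Function.iterate_succ_apply, add_comm]

lemma birk_cont [TopologicalSpace Ω] {σ : Ω → Ω} (hσ : Continuous σ) {g : Ω → ℝ}
    (hg : Continuous g) (n : ℕ) : Continuous (birk σ g n) := by
  unfold birk
  exact continuous_finset_sum _ fun k _ => hg.comp (hσ.iterate k)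

lemma map_iterate_eq [MeasurableSpace Ω] {σ : Ω → Ω} (hσ : Measurable σ)
    {μ : Measure Ω} (hμ : Measure.map σ μ = μ) (k : ℕ) :
    Measure.map (σ^[k]) μ = μ := by
  induction k with
  | zero => simp
  | succ n ih =>
    rw [Function.iterate_succ, ← Measure.map_map (hσ.iterate n) hσ, hμ, ih]

lemma bdd_integrable [MeasurableSpace Ω] {μ : Measure Ω} [IsFiniteMeasure μ]
    {u : Ω → ℝ} (hm : Measurable u) {B : ℝ} (hb : ∀ x, |u x| ≤ B) :
    Integrable u μ :=
  ⟨hm.aestronglyMeasurable, HasFiniteIntegral.of_bounded (C := B)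
    (ae_of_all _ fun x => by simpa using hb x)⟩

lemma integral_comp_inv [MeasurableSpace Ω] {σ : Ω → Ω} (hσ : Measurable σ)
    {μ : Measure Ω} (hμ : Measure.map σ μ = μ) {u : Ω → ℝ}
    (hu : AEStronglyMeasurable u μ) : ∫ x, u (σ x) ∂μ = ∫ x, u x ∂μ := by
  have h2 : ∫ x, u x ∂μ = ∫ x, u (σ x) ∂μ := by
    nth_rewrite 1 [← hμ]
    exact integral_map hσ.aemeasurable (by rwa [hμ])
  exact h2.symm

lemma cont_integrable [MetricSpace Ω] [CompactSpace Ω] [MeasurableSpace Ω] [BorelSpace Ω]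
    {g : Ω → ℝ} (hg : Continuous g) (μ : Measure Ω) [IsFiniteMeasure μ] :
    Integrable g μ :=
  hg.integrable_of_hasCompactSupport (HasCompactSupport.of_compactSpace _)

lemma integral_birk [MetricSpace Ω] [CompactSpace Ω] [MeasurableSpace Ω] [BorelSpace Ω]
    {σ : Ω → Ω} (hσ : Continuous σ) {g : Ω → ℝ} (hg : Continuous g)
    {μ : Measure Ω} [IsFiniteMeasure μ] (hμ : Measure.map σ μ = μ) (n : ℕ) :
    ∫ x, birk σ g n x ∂μ = n * ∫ x, g x ∂μ := by
  induction n with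
  | zero => simp [birk]
  | succ n ih =>
    calc ∫ x, birk σ g (n + 1) x ∂μ = ∫ x, (g x + birk σ g n (σ x)) ∂μ := by
          simp only [birk_succ_left]
      _ = (∫ x, g x ∂μ) + ∫ x, birk σ g n (σ x) ∂μ :=
          integral_add (cont_integrable hg μ)
            (cont_integrable ((birk_cont hσ hg n).comp hσ) μ)
      _ = (∫ x, g x ∂μ) + ∫ x, birk σ g n x ∂μ := by
          rw [integral_comp_inv hσ.measurable hμ
            (birk_cont hσ hg n).measurable.aestronglyMeasurable]
      _ = (↑(n + 1)) * ∫ x, g x ∂μ := by rw [ih]; push_cast; ring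

set_option maxHeartbeats 1000000 in
lemma compl_msupport_null [MetricSpace Ω] [CompactSpace Ω] [MeasurableSpace Ω] [BorelSpace Ω]
    (μ : Measure Ω) : μ (msupport μ)ᶜ = 0 := by
  set S : Set (Set Ω) := {U | IsOpen U ∧ μ U = 0} with hS
  have hcompl : (msupport μ)ᶜ = ⋃₀ S := by
    ext ω
    simp only [Set.mem_compl_iff, msupport, Set.mem_setOf_eq, Set.mem_sUnion, not_forall]
    constructor
    · rintro ⟨U, hU, hωU, hpos⟩
      exact ⟨U, ⟨hU, by simpa using hpos⟩, hωU⟩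
    · rintro ⟨U, ⟨hU, hU0⟩, hωU⟩
      exact ⟨U, hU, hωU, by simp [hU0]⟩
  obtain ⟨T, hTc, hTS, hTeq⟩ := TopologicalSpace.isOpen_sUnion_countable S fun U hU => hU.1
  rw [hcompl, ← hTeq]
  exact (measure_sUnion_null_iff hTc).2 fun U hU => (hTS hU).2

/-- every invariant measure supported in the Mather set is minimizing. -/
theorem stmt5 [MetricSpace Ω] [CompactSpace Ω] [MeasurableSpace Ω] [BorelSpace Ω]
    (σ : Ω → Ω) (hσ : Continuous σ) (f : Ω → ℝ) (hf : Continuous f) (fbar : ℝ)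
    (hfbar : IsErgMinValue σ f fbar) (C : ℝ) (hC : 0 ≤ C)
    (hlow : ∀ ω : Ω, ∀ n : ℕ, 1 ≤ n → birk σ (fun x => f x - fbar) n ω ≥ -C) :
    ∀ μ : Measure Ω, IsInvProb σ μ → msupport μ ⊆ MatherSet σ f fbar →
      ∫ x, f x ∂μ = fbar := by
  intro μ hμ hsupp
  obtain ⟨hμprob, hμmap⟩ := hμ
  haveI := hμprob
  set g : Ω → ℝ := fun x => f x - fbar with hgdef
  have hgc : Continuous g := hf.sub continuous_const
  -- a bound on |g|
  obtain ⟨M, hM0, hM⟩ : ∃ M, 0 ≤ M ∧ ∀ ω, |g ω| ≤ M := by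
    obtain ⟨M, hMub⟩ := (isCompact_range (hgc.abs)).bddAbove
    exact ⟨max M 0, le_max_right _ _,
      fun ω => le_trans (hMub (Set.mem_range_self ω)) (le_max_left _ _)⟩
  -- the transfer function
  set u : Ω → ℝ := fun ω => -(⨅ n : ℕ, birk σ g (n + 1) ω) with hudef
  have hbdd : ∀ ω, BddBelow (Set.range fun n : ℕ => birk σ g (n + 1) ω) := fun ω =>
    ⟨-C, by rintro x ⟨n, rfl⟩; exact hlow ω (n + 1) (Nat.le_add_left 1 n)⟩
  have hu_le : ∀ ω, u ω ≤ C := fun ω => by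
    have h1 : -C ≤ ⨅ n : ℕ, birk σ g (n + 1) ω :=
      le_ciInf fun n => hlow ω (n + 1) (Nat.le_add_left 1 n)
    rw [hudef]; dsimp only; linarith
  have hu_ge : ∀ ω, -(g ω) ≤ u ω := fun ω => by
    have h1 : (⨅ n : ℕ, birk σ g (n + 1) ω) ≤ birk σ g (0 + 1) ω := ciInf_le (hbdd ω) 0
    have h2 : birk σ g (0 + 1) ω = g ω := by simp [birk]
    rw [hudef]; dsimp only; linarith
  have hu_abs : ∀ ω, |u ω| ≤ C + M := fun ω => by
    have h1 := hu_le ω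
    have h2 := hu_ge ω
    have h3 := (abs_le.1 (hM ω)).2
    rw [abs_le]; constructor <;> linarith
  have hu_meas : Measurable u := by
    have h1 : Measurable fun ω => ⨅ n : ℕ, birk σ g (n + 1) ω :=
      Measurable.iInf fun n => (birk_cont hσ hgc (n + 1)).measurable
    exact h1.neg
  -- cohomological inequality
  have hkey : ∀ ω, u (σ ω) - u ω ≤ g ω := fun ω => by
    have h1 : (⨅ n : ℕ, birk σ g (n + 1) ω) - g ω ≤ ⨅ n : ℕ, birk σ g (n + 1) (σ ω) :=
      le_ciInf fun n => by
        have h2 := ciInf_le (hbdd ω) (n + 1)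
        rw [birk_succ_left] at h2
        linarith
    rw [hudef]; dsimp only; linarith
  set φ : Ω → ℝ := fun ω => g ω - (u (σ ω) - u ω) with hφdef
  have hφ0 : ∀ ω, 0 ≤ φ ω := fun ω => by have := hkey ω; rw [hφdef]; dsimp only; linarith
  have hφmeas : Measurable φ :=
    hgc.measurable.sub ((hu_meas.comp hσ.measurable).sub hu_meas)
  have hφabs : ∀ ω, |φ ω| ≤ M + ((C + M) + (C + M)) := fun ω => by
    have h1 := hM ω
    have h2 := hu_abs (σ ω)
    have h3 := hu_abs ω
    rw [hφdef]; dsimp only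
    calc |g ω - (u (σ ω) - u ω)| ≤ |g ω| + |u (σ ω) - u ω| := abs_sub _ _
      _ ≤ |g ω| + (|u (σ ω)| + |u ω|) := by
          have := abs_sub (u (σ ω)) (u ω); linarith [abs_sub_abs_le_abs_sub (u (σ ω)) (u ω),
            abs_sub (u (σ ω)) (u ω)]
      _ ≤ M + ((C + M) + (C + M)) := by linarith
  -- the uniform upper bound on Birkhoff sums on the support of any minimizing measure
  have hmin : ∀ ν : Measure Ω, IsMinimizing σ f fbar ν →
      ∀ ω ∈ msupport ν, ∀ n : ℕ, birk σ g n ω ≤ C + (C + M) := by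
    rintro ν ⟨⟨hνprob, hνmap⟩, hνint⟩ ω hω n
    haveI := hνprob
    have hgint0 : ∫ x, g x ∂ν = 0 := by
      have h1 : ∫ x, g x ∂ν = (∫ x, f x ∂ν) - fbar := by
        rw [hgdef]
        rw [integral_sub (cont_integrable hf ν) (integrable_const _)]
        simp [measure_univ]
      rw [h1, hνint, sub_self]
    have hφint : Integrable φ ν := bdd_integrable hφmeas hφabs
    have hφint0 : ∫ x, φ x ∂ν = 0 := by
      have huint : Integrable u ν := bdd_integrable hu_meas hu_abs
      have huσint : Integrable (fun x => u (σ x)) ν :=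
        bdd_integrable (hu_meas.comp hσ.measurable) (fun x => hu_abs (σ x))
      have h2 : ∫ x, u (σ x) ∂ν = ∫ x, u x ∂ν :=
        integral_comp_inv hσ.measurable hνmap hu_meas.aestronglyMeasurable
      have h3 : ∫ x, φ x ∂ν = (∫ x, g x ∂ν) - ∫ x, (u (σ x) - u x) ∂ν :=
        integral_sub (bdd_integrable hgc.measurable hM)
          (huσint.sub huint : Integrable (fun x => u (σ x) - u x) ν)
      have h4 : ∫ x, (u (σ x) - u x) ∂ν = (∫ x, u (σ x) ∂ν) - ∫ x, u x ∂ν :=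
        integral_sub huσint huint
      rw [h3, h4, h2, hgint0]; ring
    have hae : φ =ᵐ[ν] 0 :=
      (integral_eq_zero_iff_of_nonneg hφ0 hφint).1 hφint0
    -- the invariant full-measure set where the cocycle equation holds along the whole orbit
    set A : Set Ω := {x | φ x = 0} with hAdef
    have hAmeas : MeasurableSet A := hφmeas (measurableSet_singleton 0)
    set D : Set Ω := ⋂ k : ℕ, σ^[k] ⁻¹' A with hDdef
    have hDnull : ν Dᶜ = 0 := by
      rw [hDdef, Set.compl_iInter]
      refine measure_iUnion_null fun k => ?_
      have h4 : (σ^[k] ⁻¹' A)ᶜ = σ^[k] ⁻¹' Aᶜ := by rw [Set.preimage_compl]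
      rw [h4, ← Measure.map_apply (hσ.measurable.iterate k) hAmeas.compl,
        map_iterate_eq hσ.measurable hνmap k]
      have h5 : Aᶜ = {x | ¬ φ x = 0} := rfl
      rw [h5]
      exact hae
    have hDbound : ∀ x ∈ D, ∀ m : ℕ, birk σ g m x ≤ C + (C + M) := by
      intro x hx m
      have htel : birk σ g m x = u (σ^[m] x) - u x := by
        have hterm : ∀ k : ℕ, g (σ^[k] x) = u (σ^[k + 1] x) - u (σ^[k] x) := fun k => by
          have hk : φ (σ^[k] x) = 0 := Set.mem_iInter.1 hx k
          rw [hφdef] at hk; dsimp only at hk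
          rw [Function.iterate_succ_apply']
          linarith
        unfold birk
        calc ∑ k ∈ Finset.range m, g (σ^[k] x)
            = ∑ k ∈ Finset.range m, (u (σ^[k + 1] x) - u (σ^[k] x)) :=
              Finset.sum_congr rfl fun k _ => hterm k
          _ = u (σ^[m] x) - u (σ^[0] x) := Finset.sum_range_sub (fun k => u (σ^[k] x)) m
          _ = u (σ^[m] x) - u x := by rw [Function.iterate_zero_apply]
      have h6 := hu_le (σ^[m] x)
      have h7 := hu_ge x
      have h8 := (abs_le.1 (hM x)).2
      rw [htel]; linarith
    have hclos : msupport ν ⊆ closure D := by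
      intro y hy
      by_contra hyc
      have hpos := hy _ isClosed_closure.isOpen_compl hyc
      have h9 : ν (closure D)ᶜ ≤ ν Dᶜ :=
        measure_mono (Set.compl_subset_compl.2 subset_closure)
      rw [hDnull] at h9
      exact absurd (lt_of_lt_of_le hpos h9) (lt_irrefl 0)
    have hcl : closure D ⊆ {x | birk σ g n x ≤ C + (C + M)} :=
      closure_minimal (fun x hx => hDbound x hx n)
        (isClosed_le (birk_cont hσ hgc n) continuous_const)
    exact hcl (hclos hω)
  -- transfer the bound to μ-a.e.
  have hμae : ∀ n : ℕ, ∀ᵐ ω ∂μ, birk σ g n ω ≤ C + (C + M) := fun n => by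
    rw [ae_iff]
    refine measure_mono_null (fun ω hω => ?_) (compl_msupport_null μ)
    intro hmem
    obtain ⟨ν, hν, hων⟩ := hsupp hmem
    exact hω (hmin ν hν ω hων n)
  have hint : ∀ n : ℕ, (n : ℝ) * ∫ x, g x ∂μ ≤ C + (C + M) := fun n => by
    rw [← integral_birk hσ hgc hμmap n]
    calc ∫ x, birk σ g n x ∂μ ≤ ∫ _, C + (C + M) ∂μ :=
          integral_mono_ae (cont_integrable (birk_cont hσ hgc n) μ)
            (integrable_const _) (hμae n)
      _ = C + (C + M) := by simp [measure_univ]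
  have hI0 : ∫ x, g x ∂μ ≤ 0 := by
    by_contra h
    push_neg at h
    obtain ⟨n, hn⟩ := exists_nat_gt ((C + (C + M)) / ∫ x, g x ∂μ)
    have h10 : C + (C + M) < (n : ℝ) * ∫ x, g x ∂μ := (div_lt_iff₀ h).1 hn
    linarith [hint n]
  have hIge : fbar ≤ ∫ x, f x ∂μ := hfbar.2 ⟨μ, ⟨hμprob, hμmap⟩, rfl⟩
  have hIg : ∫ x, g x ∂μ = (∫ x, f x ∂μ) - fbar := by
    rw [hgdef]
    rw [integral_sub (cont_integrable hf μ) (integrable_const _)]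
    simp [measure_univ]
  linarith
end
end
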